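/- arXiv:2210.06076 — 2 statements merged into one kernel-verified Lean document; each statement's English description precedes it below -/
import Mathlib

section
/- Let Q ≥ 1 and let A = (A_α)_{α ∈ Γ} ∈ ℤ^{|Γ|}, B ∈ ℤ^D. Define the complete Gauss sum S(A/Q, B/Q) = Q^{-D} Σ_{r ∈ ((0,Q] ∩ ℤ)^D} e(−Σ_α (A_α/Q) r^α − (B/Q)·r), where e(t) = e^{2πi t}. If gcd of all entries of A and B together with Q equals 1, but v := gcd(A, Q) > 1, then S(A/Q, B/Q) = 0. -/
open Finset

/-- `e(t) = exp(2πi t)`. -/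
noncomputable def eC (t : ℝ) : ℂ := Complex.exp (2 * Real.pi * Complex.I * t)

/-!
Let `v = gcd(A, Q)` and `Q = v m`. The summand depends only on `r mod Q`, so the sum runs over
`(ℤ/Q)^D` and is invariant under the translation `r ↦ r + m e_j`. Since `v ∣ A_α`, each
`A_α r^α` changes by a multiple of `v m = Q`, while `B·r` changes by `m B_j`; hence the sum is
multiplied by `e(-B_j / v)`. As `gcd(A, B, Q) = 1`, some `B_j` is not divisible by `v`, and then
this factor is not `1`, so the sum vanishes.
-/
theorem eC_intCast_div (Q : ℕ) [NeZero Q] (n : ℤ) :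
    eC ((n : ℝ) / Q) = ZMod.stdAddChar (n : ZMod Q) := by
  rw [eC, ZMod.stdAddChar_coe]
  push_cast
  ring_nf

theorem Fintype.sum_eq_zero_of_map_add_eq_mul {G M : Type*} [AddGroup G] [Fintype G]
    [Semiring M] [IsDomain M] {F : G → M} {v : G} {c : M} (hc : c ≠ 1)
    (hF : ∀ x, F (x + v) = c * F x) : ∑ x, F x = 0 := by
  have h : c * ∑ x, F x = ∑ x, F x := by
    rw [mul_sum, ← Fintype.sum_equiv (Equiv.addRight v) (fun x => F (x + v)) F (fun _ => rfl)]
    simp only [hF]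
  by_contra hs
  exact hc ((mul_eq_right₀ hs).mp h)

namespace ZMod

variable {Q : ℕ} [NeZero Q]

def iccRep (x : ZMod Q) : ℤ := ((x - 1).val : ℤ) + 1

theorem iccRep_mem_Icc (x : ZMod Q) : iccRep x ∈ Icc (1 : ℤ) Q := by
  have := (x - 1).val_lt
  simp only [iccRep, mem_Icc]
  omega

theorem intCast_iccRep (x : ZMod Q) : (iccRep x : ZMod Q) = x := by
  simp [iccRep]

theorem iccRep_intCast {a : ℤ} (ha : a ∈ Icc (1 : ℤ) Q) : iccRep (a : ZMod Q) = a := by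
  rw [mem_Icc] at ha
  have h : (a : ZMod Q) - 1 = ((a - 1 : ℤ) : ZMod Q) := by push_cast; ring
  rw [iccRep, h, val_intCast, Int.emod_eq_of_lt] <;> omega

theorem sum_piFinset_Icc_intCast {M : Type*} [AddCommMonoid M] {D : ℕ}
    (F : (Fin D → ZMod Q) → M) :
    ∑ r ∈ Fintype.piFinset (fun _ : Fin D => Icc (1 : ℤ) Q), F (fun i => (r i : ZMod Q)) =
      ∑ x, F x :=
  sum_nbij' (fun r i => (r i : ZMod Q)) (fun x i => iccRep (x i)) (by simp)
    (fun x _ => Fintype.mem_piFinset.mpr fun i => iccRep_mem_Icc (x i))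
    (fun r hr => funext fun i => iccRep_intCast (Fintype.mem_piFinset.mp hr i))
    (fun x _ => funext fun i => intCast_iccRep (x i)) (fun _ _ => rfl)

end ZMod

section Phase

variable {R : Type*} [CommRing R] {D : ℕ}

def phasePoly (Γ : Finset (Fin D → ℕ)) (A : (Fin D → ℕ) → ℤ) (B : Fin D → ℤ)
    (x : Fin D → R) : R :=
  ∑ α ∈ Γ, A α * ∏ i, x i ^ α i + ∑ i, B i * x i

theorem dvd_prod_pow_add_single_sub (x : Fin D → R) (j : Fin D) (t : R) (α : Fin D → ℕ) :
    t ∣ ∏ i, (x + Pi.single j t : Fin D → R) i ^ α i - ∏ i, x i ^ α i := by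
  rw [Fintype.prod_eq_mul_prod_compl j, Fintype.prod_eq_mul_prod_compl j (fun i => x i ^ α i)]
  have hrest : ∏ i ∈ {j}ᶜ, (x + Pi.single j t : Fin D → R) i ^ α i = ∏ i ∈ {j}ᶜ, x i ^ α i :=
    prod_congr rfl fun i hi => by
      rw [Pi.add_apply, Pi.single_eq_of_ne (by simpa using hi), add_zero]
  rw [hrest, ← sub_mul]
  refine Dvd.dvd.mul_right ?_ _
  simpa using sub_dvd_pow_sub_pow (x j + t) (x j) (α j)

theorem phasePoly_add_single {Γ : Finset (Fin D → ℕ)} {A : (Fin D → ℕ) → ℤ} (B : Fin D → ℤ)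
    {v : ℤ} {t : R} (hvt : (v : R) * t = 0) (hA : ∀ α ∈ Γ, v ∣ A α) (x : Fin D → R)
    (j : Fin D) : phasePoly Γ A B (x + Pi.single j t) = phasePoly Γ A B x + B j * t := by
  have hmono : ∀ α ∈ Γ,
      (A α : R) * ∏ i, (x + Pi.single j t : Fin D → R) i ^ α i = A α * ∏ i, x i ^ α i := by
    intro α hα
    obtain ⟨a, ha⟩ := hA α hα
    obtain ⟨c, hc⟩ := dvd_prod_pow_add_single_sub x j t α
    rw [← sub_eq_zero, ← mul_sub, hc, ha, Int.cast_mul]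
    linear_combination (a * c : R) * hvt
  rw [phasePoly, phasePoly, sum_congr rfl hmono]
  simp only [Pi.add_apply, Pi.single_apply, mul_add, mul_ite, mul_zero, sum_add_distrib,
    sum_ite_eq', mem_univ, if_true]
  ring

end Phase

theorem sum_eC_eq_sum_stdAddChar (D Q : ℕ) [NeZero Q] (Γ : Finset (Fin D → ℕ))
    (A : (Fin D → ℕ) → ℤ) (B : Fin D → ℤ) :
    ∑ r ∈ Fintype.piFinset (fun _ : Fin D => Icc (1 : ℤ) Q),
        eC (-(∑ α ∈ Γ, (A α : ℝ) / Q * ∏ i, (r i : ℝ) ^ α i) - ∑ i, (B i : ℝ) / Q * r i) =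
      ∑ x : Fin D → ZMod Q, ZMod.stdAddChar (-phasePoly Γ A B x) := by
  rw [← ZMod.sum_piFinset_Icc_intCast]
  refine sum_congr rfl fun r _ => ?_
  have h : -(∑ α ∈ Γ, (A α : ℝ) / Q * ∏ i, (r i : ℝ) ^ α i) - ∑ i, (B i : ℝ) / Q * r i =
      ((-phasePoly Γ A B r : ℤ) : ℝ) / Q := by
    push_cast [phasePoly, Int.cast_id]
    rw [neg_add, sub_eq_add_neg, add_div, neg_div, neg_div, sum_div, sum_div]
    simp only [div_mul_eq_mul_div]
  rw [h, eC_intCast_div]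
  simp [phasePoly]

theorem ZMod.intCast_mul_natCast_eq_zero_iff {Q v m : ℕ} (hQ : v * m = Q) (hm : m ≠ 0) (b : ℤ) :
    ((b * m : ℤ) : ZMod Q) = 0 ↔ (v : ℤ) ∣ b := by
  rw [ZMod.intCast_zmod_eq_zero_iff_dvd, ← hQ, Nat.cast_mul]
  exact mul_dvd_mul_iff_right (by exact_mod_cast hm)

theorem stmt_3_general (D : ℕ) (Q : ℕ) (hQ : 1 ≤ Q)
    (Γ : Finset (Fin D → ℕ))
    (A : (Fin D → ℕ) → ℤ) (B : Fin D → ℤ)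
    (h1 : Nat.gcd (Int.gcd (Γ.gcd A) ((Finset.univ : Finset (Fin D)).gcd B)) Q = 1)
    (hv : 1 < Int.gcd (Γ.gcd A) (Q : ℤ)) :
    (1 / (Q : ℂ) ^ D) *
        ∑ r ∈ Fintype.piFinset (fun _ : Fin D => Finset.Icc (1 : ℤ) (Q : ℤ)),
          eC (-(∑ α ∈ Γ, (A α : ℝ) / (Q : ℝ) * ∏ i, (r i : ℝ) ^ (α i))
              - ∑ i, (B i : ℝ) / (Q : ℝ) * (r i : ℝ))
      = 0 := by
  have : NeZero Q := ⟨by omega⟩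
  set v := Int.gcd (Γ.gcd A) Q
  have hvA : ∀ α ∈ Γ, (v : ℤ) ∣ A α := fun α hα => (Int.gcd_dvd_left _ _).trans (gcd_dvd hα)
  obtain ⟨m, hvm⟩ : v ∣ Q := Int.natCast_dvd_natCast.mp (Int.gcd_dvd_right _ _)
  have hm : m ≠ 0 := by rintro rfl; omega
  obtain ⟨j, hj⟩ : ∃ j, ¬ (v : ℤ) ∣ B j := by
    by_contra! hvB
    have hv_gcd : v ∣ Int.gcd (Γ.gcd A) ((univ : Finset (Fin D)).gcd B) :=
      Int.natCast_dvd_natCast.mp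
        (Int.dvd_coe_gcd (Int.gcd_dvd_left _ _) (dvd_gcd fun i _ => hvB i))
    have := Nat.dvd_gcd hv_gcd (Dvd.intro m hvm.symm)
    rw [h1, Nat.dvd_one] at this
    omega
  have hvt : ((v : ℤ) : ZMod Q) * m = 0 := by
    rw [Int.cast_natCast, ← Nat.cast_mul, ← hvm, ZMod.natCast_self]
  rw [sum_eC_eq_sum_stdAddChar, Fintype.sum_eq_zero_of_map_add_eq_mul
    (v := Pi.single j (m : ZMod Q)) (c := ZMod.stdAddChar (-((B j * m : ℤ) : ZMod Q))), mul_zero]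
  · rw [← AddChar.map_zero_eq_one (ZMod.stdAddChar (N := Q)), ZMod.injective_stdAddChar.ne_iff,
      neg_ne_zero, Ne, ZMod.intCast_mul_natCast_eq_zero_iff hvm.symm hm]
    exact hj
  · intro x
    rw [phasePoly_add_single B hvt hvA, neg_add, AddChar.map_add_eq_mul, mul_comm, Int.cast_mul,
      Int.cast_natCast]

/-- If gcd(A, B, Q) = 1 but v = gcd(A, Q) > 1, then the complete Gauss sum
S(A/Q, B/Q) = Q^{-D} Σ_{r ∈ {1,…,Q}^D} e(−Σ_α (A_α/Q) r^α − (B/Q)·r) vanishes. -/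
theorem stmt_3 (D : ℕ) (Q : ℕ) (hQ : 1 ≤ Q)
    (Γ : Finset (Fin D → ℕ)) (hΓ : ∀ α ∈ Γ, 2 ≤ ∑ i, α i)
    (A : (Fin D → ℕ) → ℤ) (B : Fin D → ℤ)
    (h1 : Nat.gcd (Int.gcd (Γ.gcd A) ((Finset.univ : Finset (Fin D)).gcd B)) Q = 1)
    (hv : 1 < Int.gcd (Γ.gcd A) (Q : ℤ)) :
    (1 / (Q : ℂ) ^ D) *
        ∑ r ∈ Fintype.piFinset (fun _ : Fin D => Finset.Icc (1 : ℤ) (Q : ℤ)),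
          eC (-(∑ α ∈ Γ, (A α : ℝ) / (Q : ℝ) * ∏ i, (r i : ℝ) ^ (α i))
              - ∑ i, (B i : ℝ) / (Q : ℝ) * (r i : ℝ))
      = 0 :=
  stmt_3_general D Q hQ Γ A B h1 hv
end

section
/- Condensation of singularities: let 0 < ε ≪ δ ≪ 1 and N ≫ δ^{-1}. Suppose there is a set H ⊂ {1,…,N} with |H| ≥ δN such that ‖n α₀‖_𝕋 ≤ ε for all n ∈ H, for some real α₀. Then there exists a positive integer q ≤ δ^{-1} such that ‖q α₀‖_𝕋 ≤ C · ε · q / (δ N) for an absolute constant C. -/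
/-!
By pigeonhole, two elements of `H` lie at distance `q₁ < 2 / δ`, so `q₁ α₀ = a + σ` with
`|σ| ≤ 2 ε`. Then `‖n σ‖ ≤ q₁ ε` for `n ∈ H`; as `n ↦ round (n σ)` has at most `N σ + 2` fibres,
each of diameter at most `2 q₁ ε / σ`, the density of `H` forces `|σ| ≤ 20 q₁ ε / (δ N)`.
Consequently, for every `n ∈ H`, `n a / q₁` is within less than `1 / q₁` of an integer, hence
`q₁ ∣ n a`. Writing `a / q₁ = a' / q` in lowest terms, `q` divides every element of `H`, so
`δ N ≤ #H ≤ N / q`, and `‖q α₀‖ ≤ |q α₀ - a'| = q |σ| / q₁`.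
-/

open Finset

/-- Distance from a real number to the nearest integer. -/
noncomputable def torusNorm (x : ℝ) : ℝ := |x - (round x : ℤ)|

theorem torusNorm_le_abs_sub (x : ℝ) (m : ℤ) : torusNorm x ≤ |x - m| := round_le x m

theorem torusNorm_neg (x : ℝ) : torusNorm (-x) = torusNorm x := by
  refine le_antisymm ?_ ?_
  · calc torusNorm (-x) ≤ |-x - ((-round x : ℤ) : ℝ)| := torusNorm_le_abs_sub _ _
      _ = torusNorm x := by rw [torusNorm, ← abs_neg]; push_cast; ring_nf
  · calc torusNorm x ≤ |x - ((-round (-x) : ℤ) : ℝ)| := torusNorm_le_abs_sub _ _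
      _ = torusNorm (-x) := by rw [torusNorm, ← abs_neg]; push_cast; ring_nf

theorem torusNorm_abs (x : ℝ) : torusNorm |x| = torusNorm x := by
  rcases abs_choice x with h | h <;> simp only [h, torusNorm_neg]

theorem torusNorm_sub_intCast (x : ℝ) (m : ℤ) : torusNorm (x - m) = torusNorm x := by
  simp only [torusNorm, round_sub_intCast, Int.cast_sub, sub_sub_sub_cancel_right]

theorem torusNorm_sub_le (x y : ℝ) : torusNorm (x - y) ≤ torusNorm x + torusNorm y :=
  calc torusNorm (x - y) ≤ |(x - round x) - (y - round y)| := by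
        simpa only [Int.cast_sub, sub_sub_sub_comm] using
          torusNorm_le_abs_sub (x - y) (round x - round y)
    _ ≤ torusNorm x + torusNorm y := abs_sub _ _

theorem torusNorm_natCast_mul_le (k : ℕ) (x : ℝ) : torusNorm (k * x) ≤ k * torusNorm x :=
  calc torusNorm (k * x) ≤ |k * x - ((k * round x : ℤ) : ℝ)| := torusNorm_le_abs_sub _ _
    _ = k * torusNorm x := by
      push_cast
      rw [← mul_sub, abs_mul, Nat.abs_cast, torusNorm]

theorem torusNorm_natCast_mul_sub_le (n q : ℕ) (a : ℤ) (α : ℝ) :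
    torusNorm (n * (q * α - a)) ≤ q * torusNorm (n * α) := by
  have h : (n : ℝ) * (q * α - a) = q * (n * α) - ((n * a : ℤ) : ℝ) := by push_cast; ring
  rw [h, torusNorm_sub_intCast]
  exact torusNorm_natCast_mul_le q _

theorem exists_lt_sub_lt_of_lt_card {H : Finset ℕ} {L k : ℕ} (hL : 0 < L)
    (hH : ∀ n ∈ H, n < L * k) (hk : k < #H) :
    ∃ a ∈ H, ∃ b ∈ H, a < b ∧ b - a < L := by
  have hmaps : Set.MapsTo (· / L) H (range k) := fun n hn ↦
    mem_range.mpr <| (Nat.div_lt_iff_lt_mul hL).mpr <| by rw [mul_comm]; exact hH n hn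
  obtain ⟨x, hx, y, hy, hxy, hdiv⟩ :=
    exists_ne_map_eq_of_card_lt_of_maps_to (by rwa [card_range]) hmaps
  have hx_eq := Nat.div_add_mod x L
  have := Nat.div_add_mod y L
  have := Nat.mod_lt x hL
  have := Nat.mod_lt y hL
  rcases hxy.lt_or_gt with h | h
  · exact ⟨x, hx, y, hy, h, by rw [hdiv] at hx_eq; omega⟩
  · exact ⟨y, hy, x, hx, h, by rw [hdiv] at hx_eq; omega⟩

theorem card_le_succ_of_forall_sub_le {S : Finset ℕ} {D : ℕ}
    (hS : ∀ x ∈ S, ∀ y ∈ S, x - y ≤ D) : #S ≤ D + 1 := by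
  rcases S.eq_empty_or_nonempty with rfl | hne
  · simp
  have hsub : S ⊆ Icc (S.min' hne) (S.min' hne + D) := fun x hx ↦
    mem_Icc.mpr ⟨S.min'_le x hx, by have := hS x hx _ (S.min'_mem hne); omega⟩
  have := card_le_card hsub
  rw [Nat.card_Icc] at this
  omega

theorem card_le_div_of_forall_dvd {H : Finset ℕ} {N q : ℕ} (hH : H ⊆ Icc 1 N)
    (hq : ∀ n ∈ H, q ∣ n) : #H ≤ N / q := by
  rw [← Nat.Ioc_filter_dvd_card_eq_div]
  exact card_le_card fun n hn ↦ mem_filter.mpr ⟨mem_Ioc.mpr (mem_Icc.mp (hH hn)), hq n hn⟩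

theorem card_le_of_torusNorm_mul_le {H : Finset ℕ} {N : ℕ} {σ η : ℝ} (hσ : 0 < σ)
    (hη0 : 0 ≤ η) (hH : ∀ n ∈ H, n ≤ N) (hη : ∀ n ∈ H, torusNorm (n * σ) ≤ η) :
    (#H : ℝ) ≤ (2 * η / σ + 1) * (N * σ + 2) := by
  set f : ℕ → ℤ := fun n ↦ round (n * σ)
  have hfibre : ∀ k ∈ H.image f, #{n ∈ H | f n = k} ≤ ⌊2 * η / σ⌋₊ + 1 := by
    intro k _
    refine card_le_succ_of_forall_sub_le fun x hx y hy ↦ ?_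
    rw [mem_filter] at hx hy
    rcases le_or_gt x y with hxy | hxy
    · simp [Nat.sub_eq_zero_of_le hxy]
    refine Nat.le_floor <| (le_div_iff₀ hσ).mpr ?_
    have hx' : |x * σ - k| ≤ η := hx.2 ▸ hη x hx.1
    have hy' : |y * σ - k| ≤ η := hy.2 ▸ hη y hy.1
    rw [Nat.cast_sub hxy.le, sub_mul]
    linarith [abs_le.mp hx', abs_le.mp hy']
  have himage : H.image f ⊆ Icc 0 (round (N * σ)) := by
    intro k hk
    obtain ⟨n, hn, rfl⟩ := mem_image.mp hk
    have hnN : (n : ℝ) * σ ≤ N * σ := by gcongr; exact_mod_cast hH n hn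
    simp only [f, mem_Icc, round_eq]
    exact ⟨Int.floor_nonneg.mpr (by positivity), Int.floor_le_floor (by linarith)⟩
  have hround : (0 : ℤ) ≤ round (N * σ) := by
    rw [round_eq]; exact Int.floor_nonneg.mpr (by positivity)
  have hcard_image : (#(H.image f) : ℝ) ≤ N * σ + 2 := by
    have := card_le_card himage
    rw [Int.card_Icc, sub_zero] at this
    have h : ((round (N * σ) + 1).toNat : ℝ) = round (N * σ) + 1 := by
      exact_mod_cast Int.toNat_of_nonneg (by omega)
    linarith [round_le_add_half ((N : ℝ) * σ), (Nat.cast_le (α := ℝ)).mpr this]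
  have hfloor : ((⌊2 * η / σ⌋₊ + 1 : ℕ) : ℝ) ≤ 2 * η / σ + 1 := by
    push_cast
    exact add_le_add_left (Nat.floor_le (by positivity)) 1
  calc (#H : ℝ) ≤ ((⌊2 * η / σ⌋₊ + 1 : ℕ) : ℝ) * #(H.image f) := by
        exact_mod_cast card_le_mul_card_image H _ hfibre
    _ ≤ (2 * η / σ + 1) * (N * σ + 2) := by gcongr

theorem intCast_dvd_mul_of_torusNorm_le {q n : ℕ} {a : ℤ} {α ε ρ : ℝ}
    (hn : torusNorm (n * α) ≤ ε) (hα : |q * α - a| ≤ ρ) (h : q * ε + n * ρ < 1) :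
    (q : ℤ) ∣ n * a := by
  set m := round ((n : ℝ) * α)
  have hz : (((n * a - q * m : ℤ)) : ℝ) = q * (n * α - m) - n * (q * α - a) := by
    push_cast; ring
  have hlt : |((n * a - q * m : ℤ) : ℝ)| < 1 := by
    rw [hz]
    calc |q * (n * α - m) - n * (q * α - a)| ≤ |q * (n * α - m)| + |n * (q * α - a)| :=
          abs_sub _ _
      _ = q * torusNorm (n * α) + n * |q * α - a| := by
          rw [abs_mul, abs_mul, Nat.abs_cast, Nat.abs_cast, torusNorm]
      _ ≤ q * ε + n * ρ := by gcongr
      _ < 1 := h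
  have h0 : n * a - q * m = 0 := Int.abs_lt_one_iff.mp (by exact_mod_cast hlt)
  exact ⟨m, by linarith⟩

theorem exists_forall_dvd_torusNorm_le {H : Finset ℕ} {q₁ : ℕ} {a : ℤ} {α B : ℝ}
    (hq₁ : 0 < q₁) (hα : |q₁ * α - a| ≤ q₁ * B)
    (hdvd : ∀ n ∈ H, (q₁ : ℤ) ∣ n * a) :
    ∃ q : ℕ, 0 < q ∧ (∀ n ∈ H, q ∣ n) ∧ torusNorm (q * α) ≤ q * B := by
  obtain ⟨g, q, a', hg, hcop, hq₁_eq, ha_eq⟩ :=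
    Int.exists_gcd_one' (Int.gcd_pos_of_ne_zero_left a (by positivity : (q₁ : ℤ) ≠ 0))
  have hq : 0 < q :=
    pos_of_mul_pos_left (hq₁_eq ▸ (by positivity : (0 : ℤ) < q₁)) g.cast_nonneg
  lift q to ℕ using hq.le
  have hq₁' : q₁ = q * g := by exact_mod_cast hq₁_eq
  refine ⟨q, by exact_mod_cast hq, fun n hn ↦ ?_, ?_⟩
  · have h := hdvd n hn
    rw [hq₁_eq, ha_eq, ← mul_assoc] at h
    exact Int.natCast_dvd_natCast.mp <| Int.dvd_of_dvd_mul_left_of_gcd_one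
      ((mul_dvd_mul_iff_right (by positivity)).mp h) hcop
  · have hgR : (0 : ℝ) < g := by exact_mod_cast hg
    have hsplit : (q₁ : ℝ) * α - a = g * (q * α - a') := by
      rw [hq₁', ha_eq]; push_cast; ring
    rw [hsplit, abs_mul, Nat.abs_cast, hq₁'] at hα
    push_cast at hα
    calc torusNorm (q * α) ≤ |q * α - a'| := torusNorm_le_abs_sub _ _
      _ ≤ q * B := by nlinarith

theorem natCast_le_inv_of_forall_dvd {H : Finset ℕ} {N q : ℕ} {δ : ℝ} (hH : H ⊆ Icc 1 N)
    (hδ : 0 < δ) (hN : 0 < N) (hcard : δ * N ≤ #H) (hq : ∀ n ∈ H, q ∣ n) :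
    (q : ℝ) ≤ δ⁻¹ := by
  have hNR : (0 : ℝ) < N := by exact_mod_cast hN
  have h : δ * N ≤ N / q :=
    hcard.trans <| (Nat.cast_le.mpr (card_le_div_of_forall_dvd hH hq)).trans Nat.cast_div_le
  rcases (Nat.cast_nonneg (α := ℝ) q).eq_or_lt with hq0 | hq0
  · rw [← hq0]; positivity
  rw [le_div_iff₀ hq0] at h
  rw [le_inv_comm₀ (by positivity) hδ, inv_eq_one_div, le_div_iff₀ hq0]
  nlinarith

theorem exists_torusNorm_le_two_mul_of_dense {H : Finset ℕ} {N : ℕ} {α δ ε : ℝ}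
    (hH : ∀ n ∈ H, n ≤ N) (hδ : 0 < δ) (hcard : δ * N ≤ #H) (hδN : 2 < δ * N)
    (hnear : ∀ n ∈ H, torusNorm (n * α) ≤ ε) :
    ∃ q : ℕ, 0 < q ∧ (q : ℝ) < 2 / δ ∧ torusNorm (q * α) ≤ 2 * ε := by
  set L := ⌈2 / δ⌉₊
  have hL : 0 < L := Nat.ceil_pos.mpr (by positivity)
  have hk : N / L + 1 < #H := by
    have h : ((N / L : ℕ) : ℝ) ≤ δ * N / 2 :=
      calc ((N / L : ℕ) : ℝ) ≤ N / L := Nat.cast_div_le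
        _ ≤ N / (2 / δ) :=
          div_le_div_of_nonneg_left (by positivity) (by positivity) (Nat.le_ceil _)
        _ = δ * N / 2 := by field_simp
    exact_mod_cast (show ((N / L + 1 : ℕ) : ℝ) < #H by push_cast; linarith)
  obtain ⟨n₁, hn₁, n₂, hn₂, hlt, hgap⟩ := exists_lt_sub_lt_of_lt_card hL
    (fun n hn ↦ (hH n hn).trans_lt (Nat.lt_mul_div_succ N hL)) hk
  refine ⟨n₂ - n₁, by omega, Nat.lt_ceil.mp hgap, ?_⟩
  rw [Nat.cast_sub hlt.le, sub_mul]
  linarith [torusNorm_sub_le (n₂ * α) (n₁ * α), hnear n₁ hn₁, hnear n₂ hn₂]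

theorem abs_le_of_torusNorm_mul_le_of_dense {H : Finset ℕ} {N : ℕ} {δ σ η : ℝ}
    (hH : ∀ n ∈ H, n ≤ N) (hcard : δ * N ≤ #H) (hδN : 100 ≤ δ * N)
    (hσ : |σ| ≤ δ / 50) (hη0 : 0 ≤ η) (hη : η ≤ δ / 50) (hnear : ∀ n ∈ H, torusNorm (n * σ) ≤ η) :
    |σ| ≤ 20 * η / (δ * N) := by
  rcases (abs_nonneg σ).eq_or_lt with h0 | hpos
  · rw [← h0]; positivity
  have hcount := card_le_of_torusNorm_mul_le hpos hη0 hH fun n hn ↦ by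
    rw [← Nat.abs_cast n, ← abs_mul, torusNorm_abs]; exact hnear n hn
  by_contra! hbig
  rw [div_lt_iff₀ (by positivity)] at hbig
  have hexpand : (2 * η / |σ| + 1) * (N * |σ| + 2) =
      2 * (N * η) + 4 * η / |σ| + N * |σ| + 2 := by
    field_simp; ring
  have h4 : 4 * η / |σ| < δ * N / 5 := by rw [div_lt_iff₀ hpos]; linarith
  have hNη : N * η ≤ δ * N / 50 := by nlinarith [(Nat.cast_nonneg (α := ℝ) N)]
  have hNσ : N * |σ| ≤ δ * N / 50 := by nlinarith [(Nat.cast_nonneg (α := ℝ) N)]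
  linarith

theorem exists_approx_forall_dvd_mul_of_dense {H : Finset ℕ} {N : ℕ} {α δ ε : ℝ}
    (hH : ∀ n ∈ H, n ≤ N) (hδ : 0 < δ) (hδ1 : δ < 1) (hε : 0 ≤ ε)
    (hεδ : ε ≤ δ ^ 2 / 100) (hcard : δ * N ≤ #H) (hδN : 100 ≤ δ * N)
    (hnear : ∀ n ∈ H, torusNorm (n * α) ≤ ε) :
    ∃ q : ℕ, 0 < q ∧ ∃ a : ℤ, |q * α - a| ≤ q * (20 * ε / (δ * N)) ∧
      ∀ n ∈ H, (q : ℤ) ∣ n * a := by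
  obtain ⟨q, hq, hqδ, hqα⟩ :=
    exists_torusNorm_le_two_mul_of_dense hH hδ hcard (by linarith) hnear
  have hN : (0 : ℝ) < N := pos_of_mul_pos_right (by linarith) hδ.le
  have hqε : q * ε ≤ δ / 50 :=
    calc q * ε ≤ 2 / δ * (δ ^ 2 / 100) := by gcongr
      _ = δ / 50 := by field_simp; ring
  have hr : |q * α - round (q * α)| ≤ 20 * (q * ε) / (δ * N) :=
    abs_le_of_torusNorm_mul_le_of_dense hH hcard hδN (hqα.trans (by nlinarith)) (by positivity)
      hqε fun n hn ↦
        (torusNorm_natCast_mul_sub_le n q _ α).trans (by gcongr; exact hnear n hn)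
  refine ⟨q, hq, round (q * α), hr.trans_eq (by ring), fun n hn ↦ ?_⟩
  refine intCast_dvd_mul_of_torusNorm_le (hnear n hn) hr ?_
  have hn : (n : ℝ) ≤ N := by exact_mod_cast hH n hn
  calc q * ε + n * (20 * (q * ε) / (δ * N))
      ≤ q * ε + N * (20 * (q * ε) / (δ * N)) := by gcongr
    _ = q * ε * (1 + 20 / δ) := by field_simp
    _ ≤ δ / 50 * (1 + 20 / δ) := by gcongr
    _ < 1 := by field_simp; linarith

/-- Condensation of singularities: if `‖n α₀‖_𝕋 ≤ ε` for all `n` in a set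
`H ⊆ {1,…,N}` of size at least `δN` (with `ε ≤ δ²/100` and `N ≥ 100/δ²`), then there is
`q ≤ δ⁻¹` with `‖q α₀‖_𝕋 ≤ C ε q/(δN)` for an absolute constant `C`. -/
theorem stmt_10 :
    ∃ C : ℝ, 0 < C ∧ ∀ (δ ε : ℝ) (N : ℕ) (α₀ : ℝ) (H : Finset ℕ),
      0 < ε → ε ≤ δ ^ 2 / 100 → 0 < δ → δ < 1 → (100 / δ ^ 2 : ℝ) ≤ N →
      H ⊆ Finset.Icc 1 N → δ * N ≤ (H.card : ℝ) →
      (∀ n ∈ H, torusNorm ((n : ℝ) * α₀) ≤ ε) →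
      ∃ q : ℕ, 1 ≤ q ∧ (q : ℝ) ≤ δ⁻¹ ∧
        torusNorm ((q : ℝ) * α₀) ≤ C * ε * q / (δ * N) := by
  refine ⟨20, by norm_num, fun δ ε N α₀ H hε hεδ hδ hδ1 hN hH hcard hnear ↦ ?_⟩
  have hδN : 100 ≤ δ * N :=
    calc (100 : ℝ) ≤ 100 / δ := le_div_self (by norm_num) hδ hδ1.le
      _ = δ * (100 / δ ^ 2) := by field_simp
      _ ≤ δ * N := by gcongr
  have hle : ∀ n ∈ H, n ≤ N := fun n hn ↦ (mem_Icc.mp (hH hn)).2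
  obtain ⟨q₁, hq₁, a, hq₁α, hdvd⟩ :=
    exists_approx_forall_dvd_mul_of_dense hle hδ hδ1 hε.le hεδ hcard hδN hnear
  obtain ⟨q, hq, hqH, hqα⟩ := exists_forall_dvd_torusNorm_le hq₁ hq₁α hdvd
  have hNpos : (0 : ℝ) < N := pos_of_mul_pos_right (by linarith) hδ.le
  exact ⟨q, hq, natCast_le_inv_of_forall_dvd hH hδ (Nat.cast_pos.mp hNpos) hcard hqH,
    hqα.trans_eq (by ring)⟩
end
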